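/- Let q ≥ 3 and let L be a line arrangement of k distinct lines in the complex projective plane which is not a pencil (not all lines pass through one point), with t_q(L) ≠ 0 and t_r(L) = 0 for all r > q. Then the Levi graph G(L) contains an induced cycle of length 2i for every integer i with 3 ≤ i ≤ ⌊(k + 9q − 18)/(3q − 5)⌋. -/

import Mathlib

open scoped LinearAlgebra.Projectivization
open Projectivization

/-- The complex projective plane. -/
abbrev ProjPoint := ℙ ℂ (Fin 3 → ℂ)

/-- A subset of the projective plane is a (projective) line if it is the zero locus of a
nonzero linear form. -/
def IsProjLine (L : Set ProjPoint) : Prop :=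
  ∃ f : (Fin 3 → ℂ) →ₗ[ℂ] ℂ, f ≠ 0 ∧ L = {p | p.submodule ≤ LinearMap.ker f}

/-- The line in the projective plane with equation `a*x + b*y + c*z = 0`. -/
def projLine (a b c : ℂ) : Set ProjPoint :=
  {p : ProjPoint | ∀ v ∈ p.submodule, a * v 0 + b * v 1 + c * v 2 = 0}

/-- An arrangement of `k` distinct lines in the complex projective plane. -/
structure LineArrangement (k : ℕ) where
  line : Fin k → Set ProjPoint
  isLine : ∀ i, IsProjLine (line i)
  inj : Function.Injective line

namespace LineArrangement

variable {k : ℕ} (A : LineArrangement k)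

/-- The multiplicity of a point: the number of lines of the arrangement passing through it. -/
noncomputable def mult (p : ProjPoint) : ℕ :=
  Set.ncard {i : Fin k | p ∈ A.line i}

/-- The singular points of the arrangement: points lying on at least two of the lines. -/
def sing : Set ProjPoint := {p | 2 ≤ A.mult p}

/-- `A.t r` is the number of points of multiplicity exactly `r`. -/
noncomputable def t (r : ℕ) : ℕ := Set.ncard {p | A.mult p = r}

/-- The Levi graph of a line arrangement: the bipartite graph on `Sing(L) ⊔ L` where a point is
adjacent to a line iff the point lies on the line. -/
def levi : SimpleGraph (↥A.sing ⊕ Fin k) where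
  Adj v w :=
    match v, w with
    | Sum.inl p, Sum.inr i => p.1 ∈ A.line i
    | Sum.inr i, Sum.inl p => p.1 ∈ A.line i
    | _, _ => False
  symm := by
    constructor
    rintro (p | i) (q | j) h <;> simp_all
  loopless := by
    constructor
    rintro (p | i) h <;> simp_all

end LineArrangement

/-- A simple graph has an induced cycle of length `n` if there is an induced subgraph
isomorphic to the cycle graph `C_n`, i.e. a graph embedding of `C_n`. -/
def HasInducedCycle {V : Type*} (G : SimpleGraph V) (n : ℕ) : Prop :=
  Nonempty (SimpleGraph.cycleGraph n ↪g G)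

/-!
An induced `2s`-cycle of the Levi graph comes from an *induced polygon*: lines
`σ 0, …, σ (s - 1)` such that the common point of two cyclically consecutive lines lies on no
other `σ c`. Two lines through a point of multiplicity `q` and a line missing that point form an
induced triangle. A polygon with `s` sides grows by inserting a line `n` between `σ (s - 1)` and
`σ 0`; it suffices that `n` avoids the at most `3s - 6` points where `σ 0` or `σ (s - 1)` meets
another side or where two consecutive sides meet. Each of these points lies on two sides, hence
on at most `q - 2` further lines, so fewer than `k` lines are excluded as long as
`s + (q - 2)(3s - 6) < k`. Iterating from `s = 3` reaches every `s` with
`(3q - 5) s ≤ k + 9q - 18`.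
-/

theorem IsProjLine.exists_finrank_eq_two {L : Set ProjPoint} (h : IsProjLine L) :
    ∃ W : Submodule ℂ (Fin 3 → ℂ), Module.finrank ℂ W = 2 ∧
      L = {p | p.submodule ≤ W} := by
  obtain ⟨f, hf, rfl⟩ := h
  refine ⟨LinearMap.ker f, ?_, rfl⟩
  have hrange : Module.finrank ℂ (LinearMap.range f) = 1 := by
    have hle : Module.finrank ℂ (LinearMap.range f) ≤ 1 := by
      simpa using Submodule.finrank_le (LinearMap.range f)
    have hne : Module.finrank ℂ (LinearMap.range f) ≠ 0 := by
      rw [Ne, Submodule.finrank_eq_zero, LinearMap.range_eq_bot]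
      exact hf
    omega
  have := LinearMap.finrank_range_add_finrank_ker f
  rw [hrange, Module.finrank_fin_fun] at this
  omega

theorem IsProjLine.existsUnique_mem_inter {L₁ L₂ : Set ProjPoint} (h₁ : IsProjLine L₁)
    (h₂ : IsProjLine L₂) (hne : L₁ ≠ L₂) : ∃! p : ProjPoint, p ∈ L₁ ∩ L₂ := by
  obtain ⟨W₁, hW₁, rfl⟩ := h₁.exists_finrank_eq_two
  obtain ⟨W₂, hW₂, rfl⟩ := h₂.exists_finrank_eq_two
  have hsup : Module.finrank ℂ ↥(W₁ ⊔ W₂) ≤ 3 := by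
    simpa using Submodule.finrank_le (W₁ ⊔ W₂)
  have hinf_le : Module.finrank ℂ ↥(W₁ ⊓ W₂) ≤ 1 := by
    by_contra! hgt
    have e₁ : W₁ ⊓ W₂ = W₁ := Submodule.eq_of_le_of_finrank_le inf_le_left (by omega)
    have e₂ : W₁ ⊓ W₂ = W₂ := Submodule.eq_of_le_of_finrank_le inf_le_right (by omega)
    exact hne (by rw [← e₁, e₂])
  have hinf : Module.finrank ℂ ↥(W₁ ⊓ W₂) = 1 := by
    have := Submodule.finrank_sup_add_finrank_inf_eq W₁ W₂
    omega
  refine ⟨Projectivization.mk'' (W₁ ⊓ W₂) hinf, ?_, fun p hp => ?_⟩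
  · show _ ≤ W₁ ∧ _ ≤ W₂
    rw [Projectivization.submodule_mk'']
    exact ⟨inf_le_left, inf_le_right⟩
  · apply Projectivization.submodule_injective
    rw [Projectivization.submodule_mk'']
    exact Submodule.eq_of_le_of_finrank_le (le_inf hp.1 hp.2) (by rw [p.finrank_submodule, hinf])

theorem val_finRotate_cases {n : ℕ} (a : Fin n) :
    a.val + 1 = n ∧ (finRotate n a).val = 0 ∨
      a.val + 1 < n ∧ (finRotate n a).val = a.val + 1 := by
  cases n with
  | zero => exact a.elim0
  | succ n =>
    rw [coe_finRotate]
    split_ifs with h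
    · exact Or.inl ⟨by rw [h, Fin.val_last], rfl⟩
    · exact Or.inr ⟨by have := Fin.val_lt_last h; omega, rfl⟩

namespace SimpleGraph

theorem cycleGraph_adj_iff_val {n : ℕ} (hn : 2 ≤ n) {u v : Fin n} :
    (cycleGraph n).Adj u v ↔ u.val + 1 = v.val ∨ v.val + 1 = u.val ∨
      (u.val = 0 ∧ v.val + 1 = n) ∨ (v.val = 0 ∧ u.val + 1 = n) := by
  rw [cycleGraph_adj']
  rcases lt_trichotomy u v with huv | rfl | huv
  · rw [Fin.coe_sub_iff_lt.mpr huv, Fin.coe_sub_iff_le.mpr huv.le]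
    have := v.isLt
    rw [Fin.lt_def] at huv
    omega
  · rw [Fin.coe_sub_iff_le.mpr le_rfl]
    omega
  · rw [Fin.coe_sub_iff_le.mpr huv.le, Fin.coe_sub_iff_lt.mpr huv]
    have := u.isLt
    rw [Fin.lt_def] at huv
    omega

theorem cycleGraph_adj_finRotate {n : ℕ} (hn : 3 ≤ n) (a : Fin n) :
    (cycleGraph n).Adj a (finRotate n a) := by
  rw [cycleGraph_adj_iff_val (by omega)]
  have := val_finRotate_cases a
  omega

theorem cycleGraph_adj_of_adj_castSucc {n : ℕ} (hn : 2 ≤ n) {a b : Fin n}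
    (h : (cycleGraph (n + 1)).Adj a.castSucc b.castSucc) : (cycleGraph n).Adj a b := by
  rw [cycleGraph_adj_iff_val (by omega), Fin.val_castSucc, Fin.val_castSucc] at h
  rw [cycleGraph_adj_iff_val hn]
  omega

theorem cycleGraph_adj_last_castSucc {n : ℕ} {b : Fin n} :
    (cycleGraph (n + 1)).Adj (Fin.last n) b.castSucc ↔ b.val = 0 ∨ b.val + 1 = n := by
  have := b.isLt
  rw [cycleGraph_adj_iff_val (by omega), Fin.val_last, Fin.val_castSucc]
  omega

end SimpleGraph

namespace LineArrangement

variable {k : ℕ}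

section Basic

variable (A : LineArrangement k)

theorem eq_of_mem_line {i j : Fin k} (hij : i ≠ j) {p p' : ProjPoint}
    (hi : p ∈ A.line i) (hj : p ∈ A.line j) (hi' : p' ∈ A.line i) (hj' : p' ∈ A.line j) :
    p = p' :=
  ((A.isLine i).existsUnique_mem_inter (A.isLine j) (A.inj.ne hij)).unique
    ⟨hi, hj⟩ ⟨hi', hj'⟩

/-- The common point of the lines `i` and `j`; a junk value when `i = j`. -/
noncomputable def meet (i j : Fin k) : ProjPoint :=
  Classical.epsilon fun p => p ∈ A.line i ∩ A.line j

theorem meet_mem_inter {i j : Fin k} (hij : i ≠ j) : A.meet i j ∈ A.line i ∩ A.line j :=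
  Classical.epsilon_spec ((A.isLine i).existsUnique_mem_inter (A.isLine j) (A.inj.ne hij)).exists

theorem eq_meet {i j : Fin k} (hij : i ≠ j) {p : ProjPoint} (hi : p ∈ A.line i)
    (hj : p ∈ A.line j) : p = A.meet i j :=
  A.eq_of_mem_line hij hi hj (A.meet_mem_inter hij).1 (A.meet_mem_inter hij).2

open Classical in
noncomputable def linesThrough (p : ProjPoint) : Finset (Fin k) :=
  Finset.univ.filter fun i => p ∈ A.line i

@[simp] theorem mem_linesThrough {p : ProjPoint} {i : Fin k} :
    i ∈ A.linesThrough p ↔ p ∈ A.line i := by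
  simp [linesThrough]

theorem card_linesThrough (p : ProjPoint) : (A.linesThrough p).card = A.mult p := by
  rw [mult, ← Set.ncard_coe_finset]
  congr 1
  ext
  simp

theorem mem_sing {p : ProjPoint} {i j : Fin k} (hij : i ≠ j) (hi : p ∈ A.line i)
    (hj : p ∈ A.line j) : p ∈ A.sing := by
  show 2 ≤ A.mult p
  rw [← card_linesThrough, ← Finset.card_pair hij]
  exact Finset.card_le_card (by simp [Finset.insert_subset_iff, mem_linesThrough, hi, hj])

theorem sing_finite : A.sing.Finite := by
  have hsub : A.sing ⊆ ⋃ (i : Fin k) (j : Fin k) (_ : i ≠ j), A.line i ∩ A.line j := by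
    intro p hp
    obtain ⟨i, j, hi, hj, hij⟩ := (Set.one_lt_ncard_iff (Set.toFinite _)).mp hp
    simp only [Set.mem_iUnion]
    exact ⟨i, j, hij, hi, hj⟩
  refine Set.Finite.subset (Set.finite_iUnion fun i => Set.finite_iUnion fun j =>
    Set.finite_iUnion fun hij => Set.Subsingleton.finite ?_) hsub
  exact fun p hp p' hp' => A.eq_of_mem_line hij hp.1 hp.2 hp'.1 hp'.2

theorem mult_le_of_t_eq_zero {q : ℕ} (hq : 1 ≤ q) (ht : ∀ r, q < r → A.t r = 0)
    (p : ProjPoint) : A.mult p ≤ q := by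
  by_contra! hlt
  have hfin : {x | A.mult x = A.mult p}.Finite :=
    A.sing_finite.subset fun x (hx : A.mult x = A.mult p) => show 2 ≤ A.mult x by omega
  have hempty := (Set.ncard_eq_zero hfin).mp (ht _ hlt)
  exact hempty.subset (rfl : A.mult p = A.mult p)

end Basic

variable {A : LineArrangement k} {s : ℕ} {σ : Fin s → Fin k}

@[simp] theorem levi_adj_inr_inl {i : Fin k} {p : A.sing} :
    A.levi.Adj (Sum.inr i) (Sum.inl p) ↔ p.1 ∈ A.line i := Iff.rfl

@[simp] theorem levi_adj_inl_inr {i : Fin k} {p : A.sing} :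
    A.levi.Adj (Sum.inl p) (Sum.inr i) ↔ p.1 ∈ A.line i := Iff.rfl

@[simp] theorem not_levi_adj_inl_inl {p p' : A.sing} : ¬ A.levi.Adj (Sum.inl p) (Sum.inl p') :=
  id

@[simp] theorem not_levi_adj_inr_inr {i j : Fin k} : ¬ A.levi.Adj (Sum.inr i) (Sum.inr j) := id

structure IsInducedPolygon (A : LineArrangement k) {s : ℕ} (σ : Fin s → Fin k) : Prop where
  injective : Function.Injective σ
  eq_or_eq_of_mem : ∀ {a b c : Fin s} {p : ProjPoint}, (SimpleGraph.cycleGraph s).Adj a b →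
    p ∈ A.line (σ a) → p ∈ A.line (σ b) → p ∈ A.line (σ c) → c = a ∨ c = b

theorem IsInducedPolygon.ne_finRotate (h : A.IsInducedPolygon σ) (hs : 3 ≤ s) (a : Fin s) :
    σ a ≠ σ (finRotate s a) :=
  h.injective.ne (SimpleGraph.cycleGraph_adj_finRotate hs a).ne

theorem IsInducedPolygon.meet_mem_line_iff (h : A.IsInducedPolygon σ) (hs : 3 ≤ s)
    (a b : Fin s) :
    A.meet (σ a) (σ (finRotate s a)) ∈ A.line (σ b) ↔ b = a ∨ b = finRotate s a := by
  have hmem := A.meet_mem_inter (h.ne_finRotate hs a)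
  refine ⟨h.eq_or_eq_of_mem (SimpleGraph.cycleGraph_adj_finRotate hs a) hmem.1 hmem.2, ?_⟩
  rintro (rfl | rfl)
  exacts [hmem.1, hmem.2]

theorem IsInducedPolygon.hasInducedCycle (h : A.IsInducedPolygon σ) (hs : 3 ≤ s) :
    HasInducedCycle A.levi (2 * s) := by
  have hP : ∀ a, A.meet (σ a) (σ (finRotate s a)) ∈ A.sing := fun a =>
    A.mem_sing (h.ne_finRotate hs a) (A.meet_mem_inter (h.ne_finRotate hs a)).1
      (A.meet_mem_inter (h.ne_finRotate hs a)).2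
  -- vertex `2a` of the cycle is the line `σ a`, vertex `2a + 1` the point `σ a ∩ σ (a + 1)`
  let vertex : Fin s × Fin 2 → A.sing ⊕ Fin k := fun x =>
    if x.2 = 0 then Sum.inr (σ x.1) else Sum.inl ⟨_, hP x.1⟩
  have hv₀ : ∀ a, vertex (a, 0) = Sum.inr (σ a) := fun _ => rfl
  have hv₁ : ∀ a, vertex (a, 1) = Sum.inl ⟨_, hP a⟩ := fun _ => rfl
  clear_value vertex
  let e : Fin s × Fin 2 ≃ Fin (2 * s) := finProdFinEquiv.trans (finCongr (mul_comm s 2))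
  have he : ∀ x, (e x).val = x.2.val + 2 * x.1.val := fun _ => rfl
  have hvertex : Function.Injective vertex := by
    rintro ⟨a, i⟩ ⟨b, j⟩ hab
    fin_cases i <;> fin_cases j <;>
      simp only [Fin.zero_eta, Fin.mk_one, hv₀, hv₁, Sum.inr.injEq, Sum.inl.injEq, reduceCtorEq,
        Subtype.mk.injEq] at hab ⊢
    · rw [h.injective hab]
    · have hmem := A.meet_mem_inter (h.ne_finRotate hs b)
      rw [← hab, Set.mem_inter_iff, h.meet_mem_line_iff hs, h.meet_mem_line_iff hs] at hmem
      simp only [Fin.ext_iff] at hmem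
      have := val_finRotate_cases a
      have := val_finRotate_cases b
      exact Prod.ext (Fin.ext (show a.val = b.val by omega)) rfl
  refine ⟨⟨⟨vertex ∘ e.symm, hvertex.comp e.symm.injective⟩, ?_⟩⟩
  intro u v
  obtain ⟨⟨a, i⟩, rfl⟩ := e.surjective u
  obtain ⟨⟨b, j⟩, rfl⟩ := e.surjective v
  simp only [Function.Embedding.coeFn_mk, Function.comp_apply, Equiv.symm_apply_apply]
  rw [SimpleGraph.cycleGraph_adj_iff_val (by omega), he, he]
  have := val_finRotate_cases a
  have := val_finRotate_cases b
  fin_cases i <;> fin_cases j <;>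
    simp only [Fin.zero_eta, Fin.mk_one, hv₀, hv₁, levi_adj_inr_inl, levi_adj_inl_inr,
      h.meet_mem_line_iff hs, not_levi_adj_inl_inl, not_levi_adj_inr_inr, Fin.ext_iff,
      false_iff] <;>
    omega

theorem card_linesThrough_sdiff_le {c : ℕ} (hmax : ∀ p, A.mult p ≤ c + 2)
    {S : Finset (Fin k)} {z : ProjPoint} {i j : Fin k} (hij : i ≠ j) (hi : i ∈ S) (hj : j ∈ S)
    (hzi : z ∈ A.line i) (hzj : z ∈ A.line j) : (A.linesThrough z \ S).card ≤ c := by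
  have hpair : {i, j} ⊆ A.linesThrough z := by
    simp [Finset.insert_subset_iff, mem_linesThrough, hzi, hzj]
  calc (A.linesThrough z \ S).card ≤ (A.linesThrough z \ {i, j}).card :=
        Finset.card_le_card <| Finset.sdiff_subset_sdiff le_rfl <| by
          simp [Finset.insert_subset_iff, hi, hj]
    _ = A.mult z - 2 := by
        rw [Finset.card_sdiff_of_subset hpair, Finset.card_pair hij, card_linesThrough]
    _ ≤ c := by have := hmax z; omega

-- Each point of `Z` excludes at most `c` lines outside `S`.
theorem exists_line_notMem_avoiding {c : ℕ} (hmax : ∀ p, A.mult p ≤ c + 2)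
    (S : Finset (Fin k)) (Z : Finset ProjPoint)
    (hZ : ∀ z ∈ Z, ∃ i ∈ S, ∃ j ∈ S, i ≠ j ∧ z ∈ A.line i ∧ z ∈ A.line j)
    (hk : S.card + c * Z.card < k) : ∃ n ∉ S, ∀ z ∈ Z, z ∉ A.line n := by
  classical
  set bad := S ∪ Z.biUnion fun z => A.linesThrough z \ S
  have hbad : bad.card < (Finset.univ : Finset (Fin k)).card := by
    calc bad.card ≤ S.card + (Z.biUnion fun z => A.linesThrough z \ S).card :=
          Finset.card_union_le _ _
      _ ≤ S.card + Z.card * c := by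
          gcongr
          refine Finset.card_biUnion_le_card_mul _ _ _ fun z hz => ?_
          obtain ⟨i, hi, j, hj, hij, hzi, hzj⟩ := hZ z hz
          exact card_linesThrough_sdiff_le hmax hij hi hj hzi hzj
      _ < _ := by rw [Finset.card_univ, Fintype.card_fin, mul_comm]; exact hk
  obtain ⟨n, -, hn⟩ := Finset.exists_mem_notMem_of_card_lt_card hbad
  have hnS : n ∉ S := fun h => hn (Finset.mem_union_left _ h)
  refine ⟨n, hnS, fun z hz hzn => hn (Finset.mem_union_right _ ?_)⟩
  exact Finset.mem_biUnion.2 ⟨z, hz, Finset.mem_sdiff.2 ⟨A.mem_linesThrough.2 hzn, hnS⟩⟩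

-- The points a line inserted between `σ (s - 1)` and `σ 0` has to avoid (see
-- `IsInducedPolygon.snoc`).
theorem exists_finset_obstacles (hσ : Function.Injective σ) (hs : 3 ≤ s) :
    ∃ Z : Finset ProjPoint, Z.card ≤ 3 * s - 6 ∧
      (∀ z ∈ Z, ∃ a b, a ≠ b ∧ z ∈ A.line (σ a) ∧ z ∈ A.line (σ b)) ∧
      ∀ {a b : Fin s} {p : ProjPoint}, a ≠ b →
        ((SimpleGraph.cycleGraph s).Adj a b ∨ a.val = 0 ∨ a.val + 1 = s) →
        p ∈ A.line (σ a) → p ∈ A.line (σ b) → p ∈ Z := by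
  classical
  let pt : ∀ {m : ℕ}, (Fin m → Fin s) → (Fin m → Fin s) → Finset ProjPoint :=
    fun f g => Finset.univ.image fun t => A.meet (σ (f t)) (σ (g t))
  let Z₀ := pt (m := s - 1) (fun _ => ⟨0, by omega⟩) (fun t => ⟨t + 1, by omega⟩)
  let Z₁ := pt (m := s - 2) (fun _ => ⟨s - 1, by omega⟩) (fun t => ⟨t + 1, by omega⟩)
  let Z₂ := pt (m := s - 3) (fun t => ⟨t + 1, by omega⟩) (fun t => ⟨t + 2, by omega⟩)
  have hcard : ∀ {m} (f g : Fin m → Fin s), (pt f g).card ≤ m := fun f g =>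
    Finset.card_image_le.trans (by rw [Finset.card_univ, Fintype.card_fin])
  have hmem : ∀ {m} {f g : Fin m → Fin s} (t : Fin m) {a b : Fin s} {p : ProjPoint}, a ≠ b →
      f t = a → g t = b → p ∈ A.line (σ a) → p ∈ A.line (σ b) → p ∈ pt f g := by
    rintro m f g t a b p hab rfl rfl hpa hpb
    exact Finset.mem_image.2 ⟨t, Finset.mem_univ _, (A.eq_meet (hσ.ne hab) hpa hpb).symm⟩
  have h₀ : ∀ {a b : Fin s} {p : ProjPoint}, a ≠ b → a.val = 0 →
      p ∈ A.line (σ a) → p ∈ A.line (σ b) → p ∈ Z₀ := by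
    intro a b p hab ha hpa hpb
    have : b.val ≠ 0 := fun hb => hab (Fin.ext (by omega))
    refine hmem ⟨b - 1, by omega⟩ hab ?_ ?_ hpa hpb <;> ext <;> dsimp only <;> omega
  have h₁ : ∀ {a b : Fin s} {p : ProjPoint}, a ≠ b → a.val + 1 = s →
      p ∈ A.line (σ a) → p ∈ A.line (σ b) → p ∈ Z₀ ∪ Z₁ := by
    intro a b p hab ha hpa hpb
    by_cases hb : b.val = 0
    · exact Finset.mem_union_left _ (h₀ (Ne.symm hab) hb hpb hpa)
    have : b.val + 1 ≠ s := fun hb' => hab (Fin.ext (by omega))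
    refine Finset.mem_union_right _ (hmem ⟨b - 1, by omega⟩ hab ?_ ?_ hpa hpb) <;> ext <;>
      dsimp only <;> omega
  have h₂ : ∀ {a b : Fin s} {p : ProjPoint}, a.val + 1 = b.val →
      p ∈ A.line (σ a) → p ∈ A.line (σ b) → p ∈ Z₀ ∪ Z₁ ∪ Z₂ := by
    intro a b p hab hpa hpb
    have hne : a ≠ b := fun h => by rw [h] at hab; omega
    by_cases ha : a.val = 0
    · exact Finset.mem_union_left _ (Finset.mem_union_left _ (h₀ hne ha hpa hpb))
    by_cases hb : b.val + 1 = s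
    · exact Finset.mem_union_left _ (h₁ (Ne.symm hne) hb hpb hpa)
    refine Finset.mem_union_right _ (hmem ⟨a - 1, by omega⟩ hne ?_ ?_ hpa hpb) <;> ext <;>
      dsimp only <;> omega
  refine ⟨Z₀ ∪ Z₁ ∪ Z₂, ?_, ?_, ?_⟩
  · calc (Z₀ ∪ Z₁ ∪ Z₂).card ≤ Z₀.card + Z₁.card + Z₂.card :=
          (Finset.card_union_le _ _).trans (by gcongr; exact Finset.card_union_le _ _)
      _ ≤ (s - 1) + (s - 2) + (s - 3) := by gcongr <;> exact hcard _ _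
      _ = 3 * s - 6 := by omega
  · intro z hz
    simp only [Finset.mem_union, Z₀, Z₁, Z₂, pt, Finset.mem_image, Finset.mem_univ,
      true_and] at hz
    obtain (⟨t, rfl⟩ | ⟨t, rfl⟩) | ⟨t, rfl⟩ := hz <;>
      refine ⟨_, _, ?_, A.meet_mem_inter (hσ.ne ?_)⟩ <;> simp only [ne_eq, Fin.ext_iff] <;>
      omega
  · intro a b p hab hadj hpa hpb
    rw [SimpleGraph.cycleGraph_adj_iff_val (by omega)] at hadj
    rcases hadj with (hadj | hadj | ⟨ha, -⟩ | ⟨-, ha⟩) | ha | ha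
    · exact h₂ hadj hpa hpb
    · exact h₂ hadj hpb hpa
    · exact Finset.mem_union_left _ (Finset.mem_union_left _ (h₀ hab ha hpa hpb))
    · exact Finset.mem_union_left _ (h₁ hab ha hpa hpb)
    · exact Finset.mem_union_left _ (Finset.mem_union_left _ (h₀ hab ha hpa hpb))
    · exact Finset.mem_union_left _ (h₁ hab ha hpa hpb)

theorem IsInducedPolygon.snoc (h : A.IsInducedPolygon σ) (hs : 3 ≤ s) {n : Fin k}
    (hn : n ∉ Set.range σ)
    (hZ : ∀ {a b : Fin s} {p : ProjPoint}, a ≠ b →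
      ((SimpleGraph.cycleGraph s).Adj a b ∨ a.val = 0 ∨ a.val + 1 = s) →
      p ∈ A.line (σ a) → p ∈ A.line (σ b) → p ∉ A.line n) :
    A.IsInducedPolygon (Fin.snoc (α := fun _ => Fin k) σ n) := by
  refine ⟨Fin.snoc_injective_iff.2 ⟨h.injective, hn⟩, ?_⟩
  have hend : ∀ {b c : Fin s} {p : ProjPoint},
      (SimpleGraph.cycleGraph (s + 1)).Adj (Fin.last s) b.castSucc → p ∈ A.line n →
      p ∈ A.line (σ b) → p ∈ A.line (σ c) → c = b := by
    intro b c p hadj hpn hpb hpc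
    by_contra hcb
    exact hZ (Ne.symm hcb) (Or.inr (SimpleGraph.cycleGraph_adj_last_castSucc.1 hadj)) hpb hpc hpn
  intro a b c p hab hpa hpb hpc
  induction a using Fin.lastCases with
  | last =>
    induction b using Fin.lastCases with
    | last => exact absurd hab (SimpleGraph.irrefl _)
    | cast b =>
      induction c using Fin.lastCases with
      | last => exact Or.inl rfl
      | cast c =>
        simp only [Fin.snoc_last, Fin.snoc_castSucc] at hpa hpb hpc
        exact Or.inr (congrArg _ (hend hab hpa hpb hpc))
  | cast a =>
    induction b using Fin.lastCases with
    | last =>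
      induction c using Fin.lastCases with
      | last => exact Or.inr rfl
      | cast c =>
        simp only [Fin.snoc_last, Fin.snoc_castSucc] at hpa hpb hpc
        exact Or.inl (congrArg _ (hend hab.symm hpb hpa hpc))
    | cast b =>
      have hadj := SimpleGraph.cycleGraph_adj_of_adj_castSucc (by omega) hab
      simp only [Fin.snoc_castSucc] at hpa hpb
      induction c using Fin.lastCases with
      | last =>
        simp only [Fin.snoc_last] at hpc
        exact absurd hpc (hZ hadj.ne (Or.inl hadj) hpa hpb)
      | cast c =>
        simp only [Fin.snoc_castSucc] at hpc
        rcases h.eq_or_eq_of_mem hadj hpa hpb hpc with rfl | rfl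
        exacts [Or.inl rfl, Or.inr rfl]

theorem IsInducedPolygon.exists_succ {c : ℕ} (hmax : ∀ p, A.mult p ≤ c + 2)
    (h : A.IsInducedPolygon σ) (hs : 3 ≤ s) (hk : s + c * (3 * s - 6) < k) :
    ∃ σ' : Fin (s + 1) → Fin k, A.IsInducedPolygon σ' := by
  classical
  obtain ⟨Z, hZcard, hZlines, hZ⟩ := exists_finset_obstacles (A := A) h.injective hs
  have hS : (Finset.univ.image σ).card = s := by
    rw [Finset.card_image_of_injective _ h.injective, Finset.card_univ, Fintype.card_fin]
  obtain ⟨n, hnS, hnZ⟩ := A.exists_line_notMem_avoiding hmax (Finset.univ.image σ) Z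
    (fun z hz => by
      obtain ⟨a, b, hab, hza, hzb⟩ := hZlines z hz
      exact ⟨σ a, by simp, σ b, by simp, h.injective.ne hab, hza, hzb⟩)
    (by rw [hS]; exact lt_of_le_of_lt (by gcongr) hk)
  have hn : n ∉ Set.range σ := fun ⟨a, ha⟩ => hnS (ha ▸ by simp)
  exact ⟨_, h.snoc hs hn fun hab hadj hpa hpb => hnZ _ (hZ hab hadj hpa hpb)⟩

theorem isInducedPolygon_of_fin_three {σ : Fin 3 → Fin k} (hσ : Function.Injective σ)
    (h : ∀ p, ∃ d, p ∉ A.line (σ d)) : A.IsInducedPolygon σ := by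
  refine ⟨hσ, fun {a b c p} hab hpa hpb hpc => ?_⟩
  by_contra! hc
  obtain ⟨d, hd⟩ := h p
  have : d = a ∨ d = b ∨ d = c := by have := hab.ne; omega
  rcases this with rfl | rfl | rfl <;> contradiction

theorem isInducedPolygon_three {p : ProjPoint} {i j m : Fin k} (hij : i ≠ j)
    (hi : p ∈ A.line i) (hj : p ∈ A.line j) (hm : p ∉ A.line m) :
    A.IsInducedPolygon ![i, j, m] := by
  have hmi : m ≠ i := fun h => hm (h ▸ hi)
  have hmj : m ≠ j := fun h => hm (h ▸ hj)
  refine isInducedPolygon_of_fin_three ?_ fun z => ?_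
  · intro a b
    fin_cases a <;> fin_cases b <;> simp [hij, hmi, hmj, hij.symm, hmi.symm, hmj.symm]
  by_cases hzi : z ∈ A.line i
  · by_cases hzj : z ∈ A.line j
    · exact ⟨2, by simpa [A.eq_of_mem_line hij hzi hzj hi hj] using hm⟩
    · exact ⟨1, hzj⟩
  · exact ⟨0, hzi⟩

theorem exists_isInducedPolygon {c : ℕ} (hmax : ∀ p, A.mult p ≤ c + 2)
    {σ₃ : Fin 3 → Fin k} (h₃ : A.IsInducedPolygon σ₃) (hs : 3 ≤ s)
    (hk : (3 * c + 1) * s ≤ k + 9 * c) :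
    ∃ σ : Fin s → Fin k, A.IsInducedPolygon σ := by
  induction s, hs using Nat.le_induction with
  | base => exact ⟨σ₃, h₃⟩
  | succ s hs ih =>
    obtain ⟨σ, hσ⟩ := ih (le_trans (by gcongr; omega) hk)
    refine hσ.exists_succ hmax hs ?_
    obtain ⟨t, rfl⟩ : ∃ t, s = t + 3 := ⟨s - 3, by omega⟩
    rw [show 3 * (t + 3) - 6 = 3 * t + 3 by omega]
    nlinarith

end LineArrangement

theorem inducedCycles_tq_max_general (k q : ℕ)
    (A : LineArrangement k)
    (hpencil : ¬ ∃ c : ProjPoint, ∀ i : Fin k, c ∈ A.line i)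
    (htq : A.t q ≠ 0) (hr : ∀ r : ℕ, q < r → A.t r = 0) :
    ∀ i : ℕ, 3 ≤ i → i ≤ (k + 9 * q - 18) / (3 * q - 5) →
      HasInducedCycle A.levi (2 * i) := by
  intro i hi hdiv
  have hq : 2 ≤ q := by
    by_contra! hq
    rw [show 3 * q - 5 = 0 by omega, Nat.div_zero] at hdiv
    omega
  obtain ⟨c, rfl⟩ : ∃ c, q = c + 2 := ⟨q - 2, by omega⟩
  have hk : (3 * c + 1) * i ≤ k + 9 * c := by
    have := (Nat.le_div_iff_mul_le (by omega)).1 hdiv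
    rw [show 3 * (c + 2) - 5 = 3 * c + 1 by omega,
      show k + 9 * (c + 2) - 18 = k + 9 * c by omega] at this
    linarith
  obtain ⟨p, hp : A.mult p = c + 2⟩ := Set.nonempty_of_ncard_ne_zero htq
  obtain ⟨i₀, j₀, hi₀, hj₀, hij⟩ :=
    (Set.one_lt_ncard_iff (Set.toFinite _)).1 (show 1 < A.mult p by omega)
  obtain ⟨m₀, hm₀⟩ := not_forall.1 (not_exists.1 hpencil p)
  obtain ⟨σ, hσ⟩ := LineArrangement.exists_isInducedPolygon
    (A.mult_le_of_t_eq_zero (by omega) hr)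
    (LineArrangement.isInducedPolygon_three hij hi₀ hj₀ hm₀) hi hk
  exact hσ.hasInducedCycle hi

/-- `q ≥ 3`, `L` not a pencil, `t_q ≠ 0` and `t_r = 0` for `r > q`: the Levi
graph has an induced cycle of length `2i` for every `3 ≤ i ≤ ⌊(k + 9q - 18)/(3q - 5)⌋`. -/
theorem inducedCycles_tq_max (k q : ℕ) (hq : 3 ≤ q)
    (A : LineArrangement k)
    (hpencil : ¬ ∃ c : ProjPoint, ∀ i : Fin k, c ∈ A.line i)
    (htq : A.t q ≠ 0) (hr : ∀ r : ℕ, q < r → A.t r = 0) :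
    ∀ i : ℕ, 3 ≤ i → i ≤ (k + 9 * q - 18) / (3 * q - 5) →
      HasInducedCycle A.levi (2 * i) :=
  inducedCycles_tq_max_general k q A hpencil htq hr
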